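/- Fix a real threshold θ > 0, a positive integer T, and a real input sequence x₁, …, x_T with −θ ≤ x_t ≤ θ for every t. For the inhibitory (PASCAL) integrate-and-fire neuron driven by this sequence, the membrane potential satisfies 0 ≤ v_t < θ for every t ≥ 0, and the accumulated signed spike count over T timesteps is exactly ∑_{t=1}^{T} s_t = ⌊(∑_{t=1}^{T} x_t)/θ + 1/2⌋; i.e., the spiking computation recovers the rounded normalized sum of the (possibly time-varying) input currents. -/

import Mathlib

/-- Signed spike of the inhibitory (PASCAL) IF neuron given total drive `w = v + x`:
`1` if `w ≥ θ`, `-1` if `w < 0`, else `0`. -/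
noncomputable def pSpike (θ w : ℝ) : ℤ :=
  if θ ≤ w then 1 else if w < 0 then -1 else 0

/-- Membrane potential of the inhibitory (PASCAL) integrate-and-fire neuron:
`v 0 = θ/2` and `v (t+1) = v t + x t - θ·s t`, where `x t` is the input at
timestep `t+1` and `s t` is the signed spike. -/
noncomputable def pV (θ : ℝ) (x : ℕ → ℝ) : ℕ → ℝ
  | 0 => θ / 2
  | t + 1 => pV θ x t + x t - θ * (pSpike θ (pV θ x t + x t) : ℝ)

/-- Signed spike emitted at timestep `t+1` (0-indexed `t`). -/
noncomputable def pS (θ : ℝ) (x : ℕ → ℝ) (t : ℕ) : ℤ :=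
  pSpike θ (pV θ x t + x t)

/-!
Since `|x t| ≤ θ`, a potential in `[0, θ)` receives a drive in `[-θ, 2θ)`, which a single
signed spike brings back into `[0, θ)`. Summing the update rule, `v T = θ/2 + ∑ x - θ ∑ s`,
so `(∑ x)/θ + 1/2` is the integer `∑ s` plus `v T / θ ∈ [0, 1)`, and its floor is `∑ s`.
-/

lemma sub_mul_pSpike_mem_Ico {θ w : ℝ} (hw : w ∈ Set.Ico (-θ) (2 * θ)) :
    w - θ * pSpike θ w ∈ Set.Ico 0 θ := by
  obtain ⟨hw₁, hw₂⟩ := hw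
  unfold pSpike
  split_ifs <;> push_cast <;> constructor <;> linarith

namespace pV

variable {θ : ℝ} {x : ℕ → ℝ}

lemma succ (t : ℕ) : pV θ x (t + 1) = pV θ x t + x t - θ * pS θ x t := rfl

lemma eq_half_add_sum_sub_mul_sum (t : ℕ) :
    pV θ x t = θ / 2 + ∑ i ∈ Finset.range t, x i - θ * ∑ i ∈ Finset.range t, pS θ x i := by
  induction t with
  | zero => simp [pV]
  | succ t ih =>
    rw [succ, ih, Finset.sum_range_succ, Finset.sum_range_succ]
    push_cast
    ring

lemma mem_Ico (hθ : 0 < θ) {T : ℕ} (hx : ∀ t ∈ Finset.range T, -θ ≤ x t ∧ x t ≤ θ) :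
    ∀ t ≤ T, pV θ x t ∈ Set.Ico 0 θ := by
  intro t ht
  induction t with
  | zero => constructor <;> simp only [pV] <;> linarith
  | succ t ih =>
    obtain ⟨hv₀, hvθ⟩ := ih (by omega)
    obtain ⟨hx₁, hx₂⟩ := hx t (Finset.mem_range.mpr ht)
    exact sub_mul_pSpike_mem_Ico ⟨by linarith, by linarith⟩

end pV

theorem pascal_spike_count_general (θ : ℝ) (hθ : 0 < θ) (T : ℕ)
    (x : ℕ → ℝ) (hx : ∀ t ∈ Finset.range T, -θ ≤ x t ∧ x t ≤ θ) :
    (∀ t ≤ T, 0 ≤ pV θ x t ∧ pV θ x t < θ) ∧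
    ∑ t ∈ Finset.range T, pS θ x t = ⌊(∑ t ∈ Finset.range T, x t) / θ + 1 / 2⌋ := by
  refine ⟨pV.mem_Ico hθ hx, ?_⟩
  obtain ⟨hv₀, hvθ⟩ := pV.mem_Ico hθ hx T le_rfl
  have hsplit : (∑ t ∈ Finset.range T, x t) / θ + 1 / 2
      = pV θ x T / θ + ((∑ t ∈ Finset.range T, pS θ x t : ℤ) : ℝ) := by
    rw [pV.eq_half_add_sum_sub_mul_sum]
    field_simp
    ring
  have hfrac : ⌊pV θ x T / θ⌋ = 0 :=
    Int.floor_eq_zero_iff.mpr ⟨div_nonneg hv₀ hθ.le, (div_lt_one hθ).mpr hvθ⟩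
  rw [hsplit, Int.floor_add_intCast, hfrac, zero_add]

/-- For inputs bounded by `|x t| ≤ θ`, the membrane potential of the inhibitory
(PASCAL) IF neuron stays in `[0, θ)`, and the accumulated signed spike count
over `T` timesteps equals `⌊(∑ x t)/θ + 1/2⌋`. -/
theorem pascal_spike_count (θ : ℝ) (hθ : 0 < θ) (T : ℕ) (hT : 0 < T)
    (x : ℕ → ℝ) (hx : ∀ t ∈ Finset.range T, -θ ≤ x t ∧ x t ≤ θ) :
    (∀ t ≤ T, 0 ≤ pV θ x t ∧ pV θ x t < θ) ∧
    ∑ t ∈ Finset.range T, pS θ x t = ⌊(∑ t ∈ Finset.range T, x t) / θ + 1 / 2⌋ :=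
  pascal_spike_count_general θ hθ T x hx
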